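/- Let φ : a ↦ ab, b ↦ a be the Fibonacci substitution and γ its two-sided periodic point of period 2 with seed b|a. Then rep_γ equals the Fibonacci analogue of the two's complement numeration system: for every n ∈ ℤ, rep_γ(n) = rep_{Fc}(n), where rep_{Fc}(n) is the unique odd-length binary word w = w_{k-1}⋯w_0 in D(DD)* avoiding factor 11 and not starting with 000 or 101, such that n = Σ_{i=0}^{k-1} w_i F_i − w_{k-1} F_k with Fibonacci numbers F_0 = 1, F_1 = 2, F_n = F_{n-1} + F_{n-2}. -/

import Mathlib

open Filter List

variable {A : Type*}

/-- A substitution applied to a word: concatenation of the images of its letters. -/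
def substW (η : A → List A) (w : List A) : List A := (w.map η).flatten

/-- The `k`-th iterate of a substitution applied to a word. -/
def iterW (η : A → List A) (k : ℕ) (w : List A) : List A := (substW η)^[k] w

/-- `η` is a substitution: nonempty images and at least one growing letter. -/
def IsSubstitution (η : A → List A) : Prop :=
  (∀ c, η c ≠ []) ∧ ∃ a, Tendsto (fun k => (iterW η k [a]).length) atTop atTop

/-- `(m i, a i)` for `i = 0, …, len-1` is an `x`-admissible sequence:
`m (i) ++ [a i]` is a prefix of `η (a (i+1))` and `m (len-1) ++ [a (len-1)]`
is a prefix of `η x`. -/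
def AdmSeq (η : A → List A) (len : ℕ) (m : ℕ → List A) (a : ℕ → A) (x : A) : Prop :=
  (∀ i, i + 1 < len → (m i ++ [a i]) <+: η (a (i + 1))) ∧
  (1 ≤ len → (m (len - 1) ++ [a (len - 1)]) <+: η x)

/-- `Σ_{j<k} |η^j(m_j)|`. -/
def sumLen (η : A → List A) (k : ℕ) (m : ℕ → List A) : ℕ :=
  ∑ j ∈ Finset.range k, (iterW η j (m j)).length

/-- `η^{k-1}(m_{k-1}) η^{k-2}(m_{k-2}) ⋯ η^0(m_0)`. -/
def concatDT (η : A → List A) (k : ℕ) (m : ℕ → List A) : List A :=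
  ((List.range k).reverse.map (fun j => iterW η j (m j))).flatten

/-- The digit word `|m_{k-1}| ⊙ |m_{k-2}| ⊙ ⋯ ⊙ |m_0|`. -/
def dtDigits (k : ℕ) (m : ℕ → List A) : List ℕ :=
  (List.range k).reverse.map (fun j => (m j).length)

/-- Partial run of the automaton `A_{η,x}`: from state `x`, the digit `d`
moves to the `d`-th letter of `η x` when `d < |η x|`. -/
def run (η : A → List A) : List ℕ → A → Option A
  | [], x => some x
  | d :: w, x => if h : d < (η x).length then run η w ((η x)[d]) else none

/-- `u` restricted to nonnegative positions is a periodic point of `η` of period `p`: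
every `η^p`-image of a prefix of `u` is again a prefix of `u`. -/
def RightPer (η : A → List A) (p : ℕ) (u : ℤ → A) : Prop :=
  ∀ n : ℕ, ∀ j : ℕ, j < (iterW η p (List.ofFn (fun i : Fin (n+1) => u i))).length →
    (iterW η p (List.ofFn (fun i : Fin (n+1) => u i)))[j]? = some (u j)

/-- `u` restricted to negative positions is a periodic point of `η` of period `p`:
every `η^p`-image of a suffix `u_{-(n+1)} ⋯ u_{-1}` of the left part is again a
suffix of the left part of `u`. -/
def LeftPer (η : A → List A) (p : ℕ) (u : ℤ → A) : Prop :=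
  ∀ n : ℕ, ∀ j : ℕ,
    j < (iterW η p (List.ofFn (fun i : Fin (n+1) => u ((i : ℤ) - (n+1))))).length →
    (iterW η p (List.ofFn (fun i : Fin (n+1) => u ((i : ℤ) - (n+1)))))[j]? =
      some (u ((j : ℤ) -
        (iterW η p (List.ofFn (fun i : Fin (n+1) => u ((i : ℤ) - (n+1))))).length))

/-- `u : ℤ → A` is a two-sided periodic point of `η` of period `p ≥ 1` with
growing seed `u₋₁ | u₀`. -/
def TwoSidedPerPoint (η : A → List A) (p : ℕ) (u : ℤ → A) : Prop :=
  1 ≤ p ∧ RightPer η p u ∧ LeftPer η p u ∧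
  Tendsto (fun k => (iterW η k [u 0]).length) atTop atTop ∧
  Tendsto (fun k => (iterW η k [u (-1)]).length) atTop atTop

/-- The Dumont–Thomas decomposition data of a positive integer `n` with respect to
the letter `x` (Theorem of Dumont–Thomas for the right-infinite part):
`p ∣ k`, `p ≤ k`, the sequence is `x`-admissible, `m_{k-1} ⋯ m_{k-p} ≠ ε` and
`Σ_{j<k} |η^j(m_j)| = n`. -/
def PosSpec (η : A → List A) (p : ℕ) (x : A) (n : ℤ) (k : ℕ) (m : ℕ → List A)
    (a : ℕ → A) : Prop :=
  p ∣ k ∧ p ≤ k ∧ AdmSeq η k m a x ∧ (∃ i, i < p ∧ m (k - 1 - i) ≠ []) ∧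
  (sumLen η k m : ℤ) = n

/-- The Dumont–Thomas decomposition data of an integer `n ≤ -2` with respect to
the letter `b` (Theorem of Dumont–Thomas for the left-infinite part). -/
def NegSpec (η : A → List A) (p : ℕ) (b : A) (n : ℤ) (k : ℕ) (m : ℕ → List A)
    (a : ℕ → A) : Prop :=
  p ∣ k ∧ p ≤ k ∧ AdmSeq η k m a b ∧
  ((List.range p).map (fun i => iterW η (p - 1 - i) (m (k - 1 - i)))).flatten
      ++ [a (k - p)] ≠ iterW η p [b] ∧
  (sumLen η k m : ℤ) = n + (iterW η k [b]).length

/-- `w` is the Dumont–Thomas complement representation `rep_u(n)` of `n ∈ ℤ`. -/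
def RepSpec (η : A → List A) (p : ℕ) (u : ℤ → A) (n : ℤ) (w : List ℕ) : Prop :=
  (n = 0 ∧ w = [0]) ∨ (n = -1 ∧ w = [1]) ∨
  (1 ≤ n ∧ ∃ k m a, PosSpec η p (u 0) n k m a ∧ w = 0 :: dtDigits k m) ∨
  (n ≤ -2 ∧ ∃ k m a, NegSpec η p (u (-1)) n k m a ∧ w = 1 :: dtDigits k m)

/-- Run of the automaton `A_{η,s}` with initial state `start`: the first digit
`0` (resp. `1`) moves to `u 0` (resp. `u (-1)`). -/
def runSeed (η : A → List A) (u : ℤ → A) : List ℕ → Option A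
  | [] => none
  | d :: w => if d = 0 then run η w (u 0) else if d = 1 then run η w (u (-1)) else none

/-- `|η^{k-p-1}(m_{k-1}) ⋯ η^0(m_p)|`, the `u`-quotient of a positive integer. -/
def uQuotPos (η : A → List A) (p k : ℕ) (m : ℕ → List A) : ℤ :=
  ∑ j ∈ Finset.range (k - p), ((iterW η j (m (j + p))).length : ℤ)

/-- `w = tail_{η,p,x}(n)`: the digit word of the unique `x`-admissible sequence of
length `p` whose length-sum is `n`. -/
def TailSpec (η : A → List A) (p : ℕ) (x : A) (n : ℕ) (w : List ℕ) : Prop :=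
  ∃ m a, AdmSeq η p m a x ∧ sumLen η p m = n ∧ w = dtDigits p m

/-- Radix order: shorter words first, ties broken lexicographically. -/
def radLt (v w : List ℕ) : Prop :=
  v.length < w.length ∨ (v.length = w.length ∧ List.Lex (· < ·) v w)

/-- Reversed-radix order: longer words first, ties broken lexicographically. -/
def revLt (v w : List ℕ) : Prop :=
  w.length < v.length ∨ (v.length = w.length ∧ List.Lex (· < ·) v w)

/-- The total order `≺` on `{0,1}D*`. -/
def precLt (v w : List ℕ) : Prop :=
  (v.head? = some 1 ∧ w.head? = some 0) ∨
  (v.head? = some 0 ∧ w.head? = some 0 ∧ radLt v w) ∨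
  (v.head? = some 1 ∧ w.head? = some 1 ∧ revLt v w)

/-- The base-2 value `Σ_{i<k} w_i 2^i` of the word `w = w_{k-1} ⋯ w_0`. -/
def natVal2 (w : List ℕ) : ℕ := w.foldl (fun acc d => 2 * acc + d) 0

/-- The two's complement value `Σ_{i<k} w_i 2^i − w_{k-1} 2^k`. -/
def val2c (w : List ℕ) : ℤ := (natVal2 w : ℤ) - (w.headI : ℤ) * 2 ^ w.length

/-- Fibonacci numbers with `F 0 = 1`, `F 1 = 2`. -/
def fib2 : ℕ → ℕ
  | 0 => 1
  | 1 => 2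
  | n + 2 => fib2 (n + 1) + fib2 n

/-- The Fibonacci complement value `Σ_{i<k} w_i F_i − w_{k-1} F_k`
of the word `w = w_{k-1} ⋯ w_0`. -/
def valFc (w : List ℕ) : ℤ :=
  (∑ i ∈ Finset.range w.length, (w.reverse.getD i 0 : ℤ) * fib2 i) -
    (w.headI : ℤ) * fib2 w.length

/-!
An admissible sequence for `φ` is a run of the automaton with states `a` and `b` in which the
digit `0` leads to `a`, the digit `1` leads to `b`, and `b` accepts only `0`. So the
Dumont–Thomas digit words read from `a` are exactly the binary words avoiding `11`, those read
from `b` are the ones that moreover start with `0`, and, since `|φʲ(a)| = F_j`, the length-sum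
of an admissible sequence is the Fibonacci value `Σ d_j F_j` of its digit word. Prepending the
seed digit (`0` for `γ₀ = a`, `1` for `γ₋₁ = b`) turns the side conditions of the two
Dumont–Thomas decompositions into the forbidden prefixes `000` and `101`, and
`|φᵏ(b)| = F_{k-1} = F_{k+1} - F_k` turns the shift by `|φᵏ(b)|` in the negative case into
the complement term `-w_{k-1} F_k`.
-/

section Substitution

variable (η : A → List A)

lemma iterW_succ (k : ℕ) (w : List A) : iterW η (k + 1) w = iterW η k (substW η w) :=
  Function.iterate_succ_apply _ _ _

lemma iterW_nil (k : ℕ) : iterW η k [] = [] := by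
  induction k with
  | zero => rfl
  | succ k ih => rwa [iterW_succ]

lemma iterW_append (k : ℕ) (u v : List A) :
    iterW η k (u ++ v) = iterW η k u ++ iterW η k v := by
  induction k generalizing u v with
  | zero => rfl
  | succ k ih => simp only [iterW_succ, substW, List.map_append, List.flatten_append, ih]

lemma iterW_succ_singleton (k : ℕ) (c : A) : iterW η (k + 1) [c] = iterW η k (η c) := by
  simp [iterW_succ, substW]

lemma admSeq_zero (m : ℕ → List A) (am : ℕ → A) (x : A) : AdmSeq η 0 m am x := by
  simp [AdmSeq]

lemma admSeq_succ {k : ℕ} {m : ℕ → List A} {am : ℕ → A} {x : A} :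
    AdmSeq η (k + 1) m am x ↔ m k ++ [am k] <+: η x ∧ AdmSeq η k m am (am k) := by
  constructor
  · rintro ⟨hlow, htop⟩
    refine ⟨by simpa using htop le_add_self, fun i hi => hlow i (by omega), fun hk => ?_⟩
    simpa [Nat.sub_add_cancel hk] using hlow (k - 1) (by omega)
  · rintro ⟨htop, hlow, hnext⟩
    refine ⟨fun i hi => ?_, fun _ => by simpa using htop⟩
    rcases (show i + 1 < k ∨ i + 1 = k by omega) with hi | rfl
    · exact hlow i hi
    · simpa using hnext (by omega)

lemma admSeq_congr {k : ℕ} {m m' : ℕ → List A} {am am' : ℕ → A} {x : A}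
    (hm : ∀ i < k, m i = m' i) (ham : ∀ i < k, am i = am' i) :
    AdmSeq η k m am x ↔ AdmSeq η k m' am' x := by
  induction k generalizing x with
  | zero => simp [admSeq_zero]
  | succ k ih =>
    rw [admSeq_succ, admSeq_succ, hm k k.lt_succ_self, ham k k.lt_succ_self,
      ih (fun i hi => hm i (by omega)) (fun i hi => ham i (by omega))]

lemma dtDigits_succ (k : ℕ) (m : ℕ → List A) :
    dtDigits (k + 1) m = (m k).length :: dtDigits k m := by
  simp [dtDigits, List.range_succ]

lemma dtDigits_length (k : ℕ) (m : ℕ → List A) : (dtDigits k m).length = k := by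
  simp [dtDigits]

lemma dtDigits_congr {k : ℕ} {m m' : ℕ → List A} (hm : ∀ i < k, m i = m' i) :
    dtDigits k m = dtDigits k m' := by
  induction k with
  | zero => rfl
  | succ k ih =>
    rw [dtDigits_succ, dtDigits_succ, hm k k.lt_succ_self, ih fun i hi => hm i (by omega)]

lemma sumLen_succ (k : ℕ) (m : ℕ → List A) :
    sumLen η (k + 1) m = (iterW η k (m k)).length + sumLen η k m := by
  simp [sumLen, Finset.sum_range_succ, add_comm]

lemma run_cons_of_prefix {l : List A} {c x : A} (h : l ++ [c] <+: η x) (w : List ℕ) :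
    run η (l.length :: w) x = run η w c := by
  have hlt : l.length < (η x).length := by simpa using h.length_le
  rw [run, dif_pos hlt, ← h.getElem (by simp)]
  simp

lemma run_isSome_of_admSeq {k : ℕ} {m : ℕ → List A} {am : ℕ → A} {x : A}
    (h : AdmSeq η k m am x) : (run η (dtDigits k m) x).isSome := by
  induction k generalizing x with
  | zero => rfl
  | succ k ih =>
    obtain ⟨htop, hrest⟩ := (admSeq_succ η).mp h
    rw [dtDigits_succ, run_cons_of_prefix η htop]
    exact ih hrest

lemma exists_admSeq_of_run_isSome {ds : List ℕ} {x : A} (h : (run η ds x).isSome) :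
    ∃ m am, AdmSeq η ds.length m am x ∧ dtDigits ds.length m = ds := by
  induction ds generalizing x with
  | nil => exact ⟨fun _ => [], fun _ => x, admSeq_zero η _ _ x, rfl⟩
  | cons d ds ih =>
    obtain ⟨hd, h⟩ : ∃ hd : d < (η x).length, (run η ds (η x)[d]).isSome := by
      rw [run] at h
      split_ifs at h with hd
      exacts [⟨hd, h⟩, absurd h (by simp)]
    obtain ⟨m, am, hadm, hdig⟩ := ih h
    have hlow : ∀ i < ds.length, m i = Function.update m ds.length ((η x).take d) i :=
      fun i hi => (Function.update_of_ne hi.ne _ _).symm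
    have hlowa : ∀ i < ds.length, am i = Function.update am ds.length (η x)[d] i :=
      fun i hi => (Function.update_of_ne hi.ne _ _).symm
    refine ⟨Function.update m ds.length ((η x).take d),
      Function.update am ds.length (η x)[d], ?_, ?_⟩
    · rw [List.length_cons, admSeq_succ, ← admSeq_congr η hlow hlowa]
      simp only [Function.update_self, List.take_append_getElem hd]
      exact ⟨List.take_prefix _ _, hadm⟩
    · rw [List.length_cons, dtDigits_succ, ← dtDigits_congr hlow, hdig]
      simp [hd.le]

end Substitution

section Fibonacci

def fibVal : List ℕ → ℕ
  | [] => 0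
  | d :: ds => d * fib2 ds.length + fibVal ds

lemma fib2_add_two (n : ℕ) : fib2 (n + 2) = fib2 (n + 1) + fib2 n := rfl

lemma fib2_pos : ∀ n, 0 < fib2 n
  | 0 | 1 => by decide
  | n + 2 => Nat.add_pos_left (fib2_pos (n + 1)) _

lemma sum_getD_reverse_mul_fib2 (w : List ℕ) :
    ∑ i ∈ Finset.range w.length, (w.reverse.getD i 0 : ℤ) * fib2 i = fibVal w := by
  induction w with
  | nil => rfl
  | cons d w ih =>
    have hlow : ∀ i ∈ Finset.range w.length,
        ((w.reverse ++ [d]).getD i 0 : ℤ) * fib2 i = (w.reverse.getD i 0 : ℤ) * fib2 i :=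
      fun i hi => by rw [List.getD_append _ _ _ _ (by simpa using hi)]
    rw [List.length_cons, Finset.sum_range_succ, List.reverse_cons, Finset.sum_congr rfl hlow,
      ih, List.getD_append_right _ _ _ _ (by simp), fibVal]
    simp [add_comm]

lemma valFc_eq_fibVal (w : List ℕ) :
    valFc w = fibVal w - (w.headI : ℤ) * fib2 w.length := by
  rw [valFc, sum_getD_reverse_mul_fib2]

lemma fibVal_add_two_le {ds : List ℕ} (hds : ∀ d ∈ ds, d < 2) :
    fibVal ds + 2 ≤ fib2 (ds.length + 1) := by
  induction ds with
  | nil => rfl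
  | cons d ds ih =>
    have hd : d ≤ 1 := Nat.le_of_lt_succ (hds d (List.mem_cons_self ..))
    have := ih fun e he => hds e (List.mem_cons_of_mem d he)
    rw [fibVal, List.length_cons, fib2_add_two]
    nlinarith

lemma fibVal_pos {ds : List ℕ} (h : ∃ d ∈ ds, d ≠ 0) : 0 < fibVal ds := by
  induction ds with
  | nil => simp at h
  | cons d ds ih =>
    rw [fibVal]
    obtain ⟨e, he, he0⟩ := h
    rcases List.mem_cons.mp he with rfl | he
    · exact Nat.add_pos_left (Nat.mul_pos (Nat.pos_of_ne_zero he0) (fib2_pos _)) _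
    · exact Nat.add_pos_right _ (ih ⟨e, he, he0⟩)

variable {a b : A} {φ : A → List A} {γ : ℤ → A}

lemma length_iterW_a (hφa : φ a = [a, b]) (hφb : φ b = [a]) :
    ∀ j, (iterW φ j [a]).length = fib2 j
  | 0 => rfl
  | 1 => by rw [iterW_succ_singleton, hφa]; rfl
  | j + 2 => by
    rw [iterW_succ_singleton, hφa, show [a, b] = [a] ++ [b] from rfl, iterW_append,
      List.length_append, iterW_succ_singleton φ j b, hφb, length_iterW_a hφa hφb (j + 1),
      length_iterW_a hφa hφb j]
    rfl

lemma length_iterW_b (hφa : φ a = [a, b]) (hφb : φ b = [a]) (j : ℕ) :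
    (iterW φ (j + 1) [b]).length = fib2 j := by
  rw [iterW_succ_singleton, hφb, length_iterW_a hφa hφb]

lemma append_singleton_prefix_pair_iff {l : List A} {c : A} :
    l ++ [c] <+: [a, b] ↔ (l = [] ∧ c = a) ∨ (l = [a] ∧ c = b) := by
  constructor
  · intro h
    have hlen := h.length_le
    rcases l with _ | ⟨e, _ | ⟨f, l⟩⟩ <;> simp_all
  · rintro (⟨rfl, rfl⟩ | ⟨rfl, rfl⟩)
    exacts [⟨[b], rfl⟩, List.prefix_rfl]

lemma append_singleton_prefix_singleton_iff {l : List A} {c : A} :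
    l ++ [c] <+: [a] ↔ l = [] ∧ c = a := by
  constructor
  · intro h
    have hlen := h.length_le
    rcases l with _ | ⟨e, l⟩ <;> simp_all
  · rintro ⟨rfl, rfl⟩
    exact List.prefix_rfl

lemma append_singleton_prefix_fib (hφa : φ a = [a, b]) (hφb : φ b = [a]) {l : List A}
    {c x : A} (hx : x = a ∨ x = b) (h : l ++ [c] <+: φ x) :
    (l = [] ∧ c = a) ∨ (l = [a] ∧ c = b) := by
  rcases hx with rfl | rfl
  · rwa [hφa, append_singleton_prefix_pair_iff] at h
  · rw [hφb, append_singleton_prefix_singleton_iff] at h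
    exact Or.inl h

lemma sumLen_eq_fibVal (hφa : φ a = [a, b]) (hφb : φ b = [a]) {k : ℕ} {m : ℕ → List A}
    {am : ℕ → A} {x : A} (hx : x = a ∨ x = b) (h : AdmSeq φ k m am x) :
    sumLen φ k m = fibVal (dtDigits k m) := by
  induction k generalizing x with
  | zero => rfl
  | succ k ih =>
    obtain ⟨htop, hrest⟩ := (admSeq_succ φ).mp h
    rw [sumLen_succ, dtDigits_succ, fibVal, dtDigits_length]
    rcases append_singleton_prefix_fib hφa hφb hx htop with ⟨hm, ha⟩ | ⟨hm, hb⟩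
    · rw [hm, iterW_nil, ih (Or.inl ha) hrest]
      simp
    · rw [hm, length_iterW_a hφa hφb, ih (Or.inr hb) hrest]
      simp

lemma run_zero_cons_a (hφa : φ a = [a, b]) (w : List ℕ) : run φ (0 :: w) a = run φ w a := by
  simp [run, hφa]

lemma run_one_cons_a (hφa : φ a = [a, b]) (w : List ℕ) : run φ (1 :: w) a = run φ w b := by
  simp [run, hφa]

lemma run_zero_cons_b (hφb : φ b = [a]) (w : List ℕ) : run φ (0 :: w) b = run φ w a := by
  simp [run, hφb]

lemma run_succ_cons_b (hφb : φ b = [a]) (d : ℕ) (w : List ℕ) :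
    run φ ((d + 1) :: w) b = none := by
  simp [run, hφb]

lemma isSome_run_iff (hφa : φ a = [a, b]) (hφb : φ b = [a]) :
    ∀ w : List ℕ, (run φ w a).isSome ↔ (∀ d ∈ w, d < 2) ∧ ¬ [1, 1] <:+: w
  | [] => by simp [run]
  | 0 :: w => by
    rw [run_zero_cons_a hφa, isSome_run_iff hφa hφb w]
    simp [List.infix_cons_iff]
  | [1] => by simp [run, hφa, List.infix_cons_iff]
  | 1 :: 0 :: w => by
    rw [run_one_cons_a hφa, run_zero_cons_b hφb, isSome_run_iff hφa hφb w]
    simp [List.infix_cons_iff]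
  | 1 :: (e + 1) :: w => by
    rw [run_one_cons_a hφa, run_succ_cons_b hφb]
    simp [List.infix_cons_iff]
    omega
  | (d + 2) :: w => by
    simp [run, hφa]

lemma exists_ne_nil_iff_not_prefix_dtDigits (t : ℕ) (m : ℕ → List A) :
    (∃ i, i < 2 ∧ m (t + 2 - 1 - i) ≠ []) ↔ ¬ [0, 0] <+: dtDigits (t + 2) m := by
  simp only [dtDigits_succ, List.cons_prefix_cons, List.nil_prefix, and_true,
    eq_comm (a := 0), List.length_eq_zero_iff]
  constructor
  · rintro ⟨i, hi, hne⟩ ⟨h1, h0⟩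
    interval_cases i <;> simp_all
  · intro h
    by_contra! hnil
    exact h ⟨hnil 0 two_pos, hnil 1 one_lt_two⟩

lemma exists_length_eq_add_two {ds : List ℕ} (hne : ds ≠ []) (heven : Even ds.length) :
    ∃ t, ds.length = t + 2 := by
  obtain ⟨s, hs⟩ := heven
  exact ⟨ds.length - 2, by have := List.length_pos_iff.mpr hne; omega⟩

lemma exists_posSpec_iff (hφa : φ a = [a, b]) (hφb : φ b = [a]) (n : ℤ) (ds : List ℕ) :
    (∃ k m am, PosSpec φ 2 a n k m am ∧ ds = dtDigits k m) ↔
      ds ≠ [] ∧ Even ds.length ∧ (run φ ds a).isSome ∧ ¬ [0, 0] <+: ds ∧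
        (fibVal ds : ℤ) = n := by
  constructor
  · rintro ⟨k, m, am, ⟨hdvd, hk, hadm, hnz, hsum⟩, rfl⟩
    obtain ⟨t, rfl⟩ : ∃ t, k = t + 2 := ⟨k - 2, by omega⟩
    refine ⟨by simp [dtDigits_succ], ?_, run_isSome_of_admSeq φ hadm,
      (exists_ne_nil_iff_not_prefix_dtDigits t m).mp hnz, ?_⟩
    · rwa [dtDigits_length, even_iff_two_dvd]
    · rwa [← sumLen_eq_fibVal hφa hφb (Or.inl rfl) hadm]
  · rintro ⟨hne, heven, hrun, h00, hval⟩
    obtain ⟨m, am, hadm, hdig⟩ := exists_admSeq_of_run_isSome φ hrun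
    obtain ⟨t, ht⟩ := exists_length_eq_add_two hne heven
    rw [ht] at hadm hdig
    refine ⟨t + 2, m, am, ⟨ht ▸ even_iff_two_dvd.mp heven, by omega, hadm, ?_, ?_⟩,
      hdig.symm⟩
    · rwa [exists_ne_nil_iff_not_prefix_dtDigits, hdig]
    · rwa [sumLen_eq_fibVal hφa hφb (Or.inl rfl) hadm, hdig]

lemma top_of_admSeq_b (hφa : φ a = [a, b]) (hφb : φ b = [a]) {t : ℕ} {m : ℕ → List A}
    {am : ℕ → A} (h : AdmSeq φ (t + 2) m am b) :
    m (t + 1) = [] ∧ ((m t = [] ∧ am t = a) ∨ (m t = [a] ∧ am t = b)) := by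
  obtain ⟨htop, hnext, -⟩ := ((admSeq_succ φ).trans (and_congr_right' (admSeq_succ φ))).mp h
  rw [hφb, append_singleton_prefix_singleton_iff] at htop
  rw [htop.2, hφa, append_singleton_prefix_pair_iff] at hnext
  exact ⟨htop.1, hnext⟩

lemma negSpec_exception_iff (hφa : φ a = [a, b]) (hφb : φ b = [a]) {t : ℕ}
    {m : ℕ → List A} {am : ℕ → A} (h : AdmSeq φ (t + 2) m am b) :
    ((List.range 2).map (fun i => iterW φ (2 - 1 - i) (m (t + 2 - 1 - i)))).flatten
        ++ [am (t + 2 - 2)] ≠ iterW φ 2 [b] ↔ m t = [] := by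
  have hb2 : iterW φ 2 [b] = [a, b] := by
    rw [iterW_succ_singleton, hφb, iterW_succ_singleton, hφa]
    rfl
  obtain ⟨htop, hnext⟩ := top_of_admSeq_b hφa hφb h
  have hexc : ((List.range 2).map (fun i => iterW φ (2 - 1 - i) (m (t + 2 - 1 - i)))).flatten
      ++ [am (t + 2 - 2)] = m t ++ [am t] := by
    simp [List.range_succ, htop, iterW, substW]
  rw [hexc, hb2]
  rcases hnext with ⟨hm, ha⟩ | ⟨hm, hb⟩ <;> simp [hm, ‹_›]

lemma exists_negSpec_iff (hφa : φ a = [a, b]) (hφb : φ b = [a]) (n : ℤ) (ds : List ℕ) :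
    (∃ k m am, NegSpec φ 2 b n k m am ∧ ds = dtDigits k m) ↔
      ds ≠ [] ∧ Even ds.length ∧ (run φ ds b).isSome ∧ ¬ [0, 1] <+: ds ∧
        (fibVal ds : ℤ) = n + fib2 (ds.length - 1) := by
  constructor
  · rintro ⟨k, m, am, ⟨hdvd, hk, hadm, hexc, hsum⟩, rfl⟩
    obtain ⟨t, rfl⟩ : ∃ t, k = t + 2 := ⟨k - 2, by omega⟩
    have hmt := (negSpec_exception_iff hφa hφb hadm).mp hexc
    refine ⟨by simp [dtDigits_succ], by rwa [dtDigits_length, even_iff_two_dvd],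
      run_isSome_of_admSeq φ hadm, by simp [dtDigits_succ, hmt], ?_⟩
    rw [← sumLen_eq_fibVal hφa hφb (Or.inr rfl) hadm, hsum, dtDigits_length,
      length_iterW_b hφa hφb (t + 1)]
    rfl
  · rintro ⟨hne, heven, hrun, h01, hval⟩
    obtain ⟨m, am, hadm, hdig⟩ := exists_admSeq_of_run_isSome φ hrun
    obtain ⟨t, ht⟩ := exists_length_eq_add_two hne heven
    rw [ht] at hadm hdig
    obtain ⟨htop, hnext⟩ := top_of_admSeq_b hφa hφb hadm
    have hmt : m t = [] := by
      rcases hnext with ⟨hm, -⟩ | ⟨hm, -⟩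
      · exact hm
      · exact absurd (hdig ▸ by simp [dtDigits_succ, htop, hm]) h01
    refine ⟨t + 2, m, am, ⟨ht ▸ even_iff_two_dvd.mp heven, by omega, hadm,
      (negSpec_exception_iff hφa hφb hadm).mpr hmt, ?_⟩, hdig.symm⟩
    rw [sumLen_eq_fibVal hφa hφb (Or.inr rfl) hadm, hdig, hval, ht,
      length_iterW_b hφa hφb (t + 1)]
    rfl

def IsFibComplementRep (n : ℤ) (w : List ℕ) : Prop :=
  (∀ d ∈ w, d < 2) ∧ Odd w.length ∧ ¬ [1, 1] <:+: w ∧ ¬ [0, 0, 0] <+: w ∧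
    ¬ [1, 0, 1] <+: w ∧ valFc w = n

lemma isFibComplementRep_zero_cons_iff (hφa : φ a = [a, b]) (hφb : φ b = [a]) (n : ℤ)
    (ds : List ℕ) :
    IsFibComplementRep n (0 :: ds) ↔
      Even ds.length ∧ (run φ ds a).isSome ∧ ¬ [0, 0] <+: ds ∧ (fibVal ds : ℤ) = n := by
  rw [← run_zero_cons_a hφa, isSome_run_iff hφa hφb]
  simp [IsFibComplementRep, valFc_eq_fibVal, fibVal, Nat.odd_add_one]
  tauto

lemma isFibComplementRep_one_cons_iff (hφa : φ a = [a, b]) (hφb : φ b = [a]) (n : ℤ)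
    {ds : List ℕ} (hne : ds ≠ []) :
    IsFibComplementRep n (1 :: ds) ↔
      Even ds.length ∧ (run φ ds b).isSome ∧ ¬ [0, 1] <+: ds ∧
        (fibVal ds : ℤ) = n + fib2 (ds.length - 1) := by
  obtain ⟨l, hl⟩ : ∃ l, ds.length = l + 1 :=
    Nat.exists_eq_succ_of_ne_zero (List.length_pos_iff.mpr hne).ne'
  rw [← run_one_cons_a hφa, isSome_run_iff hφa hφb]
  simp [IsFibComplementRep, valFc_eq_fibVal, fibVal, Nat.odd_add_one, hl, fib2_add_two,
    Nat.even_add_one, sub_eq_iff_eq_add]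
  tauto

lemma fibVal_add_two_le_of_isSome_run_b (hφa : φ a = [a, b]) (hφb : φ b = [a]) :
    ∀ {ds : List ℕ}, 2 ≤ ds.length → (run φ ds b).isSome → ¬ [0, 1] <+: ds →
      fibVal ds + 2 ≤ fib2 (ds.length - 1)
  | 0 :: 0 :: r, _, hrun, _ => by
    rw [run_zero_cons_b hφb, run_zero_cons_a hφa, isSome_run_iff hφa hφb] at hrun
    simpa [fibVal] using fibVal_add_two_le hrun.1
  | 0 :: 1 :: r, _, _, h01 => absurd ⟨r, rfl⟩ h01
  | 0 :: (e + 2) :: r, _, hrun, _ => by simp [run, hφa, hφb] at hrun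
  | (d + 1) :: r, _, hrun, _ => by simp [run_succ_cons_b hφb] at hrun

lemma repSpec_zero_cons_iff (hφa : φ a = [a, b]) (hφb : φ b = [a]) (hγ0 : γ 0 = a) (n : ℤ)
    (ds : List ℕ) : RepSpec φ 2 γ n (0 :: ds) ↔ IsFibComplementRep n (0 :: ds) := by
  have hrep : RepSpec φ 2 γ n (0 :: ds) ↔
      (n = 0 ∧ ds = []) ∨
        (1 ≤ n ∧ ∃ k m am, PosSpec φ 2 a n k m am ∧ ds = dtDigits k m) := by
    simp only [RepSpec, hγ0, List.cons.injEq, true_and, zero_ne_one, false_and, and_false,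
      exists_false, false_or, or_false]
  rw [hrep, exists_posSpec_iff hφa hφb, isFibComplementRep_zero_cons_iff hφa hφb]
  rcases eq_or_ne ds [] with rfl | hne
  · simp [run, fibVal]
    omega
  refine ⟨fun h => (h.resolve_left fun h0 => hne h0.2).2.2, fun h => Or.inr ⟨?_, hne, h⟩⟩
  obtain ⟨heven, -, h00, hval⟩ := h
  have hpos : 0 < fibVal ds := fibVal_pos <| by
    by_contra! hzero
    obtain ⟨t, ht⟩ := exists_length_eq_add_two hne heven
    exact h00 (List.eq_replicate_iff.mpr ⟨ht, hzero⟩ ▸ ⟨List.replicate t 0, rfl⟩)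
  omega

lemma repSpec_one_cons_iff (hφa : φ a = [a, b]) (hφb : φ b = [a]) (hγ1 : γ (-1) = b) (n : ℤ)
    (ds : List ℕ) : RepSpec φ 2 γ n (1 :: ds) ↔ IsFibComplementRep n (1 :: ds) := by
  have hrep : RepSpec φ 2 γ n (1 :: ds) ↔
      (n = -1 ∧ ds = []) ∨
        (n ≤ -2 ∧ ∃ k m am, NegSpec φ 2 b n k m am ∧ ds = dtDigits k m) := by
    simp only [RepSpec, hγ1, List.cons.injEq, true_and, one_ne_zero, false_and, and_false,
      exists_false, false_or]
  rw [hrep, exists_negSpec_iff hφa hφb]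
  rcases eq_or_ne ds [] with rfl | hne
  · simp [IsFibComplementRep, valFc, fib2, List.infix_cons_iff]
    omega
  rw [isFibComplementRep_one_cons_iff hφa hφb n hne]
  refine ⟨fun h => (h.resolve_left fun h1 => hne h1.2).2.2, fun h => Or.inr ⟨?_, hne, h⟩⟩
  obtain ⟨heven, hrun, h01, hval⟩ := h
  obtain ⟨t, ht⟩ := exists_length_eq_add_two hne heven
  have := fibVal_add_two_le_of_isSome_run_b hφa hφb (by omega) hrun h01
  omega

end Fibonacci

theorem rep_eq_fib_complement_general (a b : A)
    (φ : A → List A) (hφa : φ a = [a, b]) (hφb : φ b = [a])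
    (γ : ℤ → A)
    (hseed : γ (-1) = b ∧ γ 0 = a) :
    ∀ (n : ℤ) (w : List ℕ),
      RepSpec φ 2 γ n w ↔
        ((∀ d ∈ w, d < 2) ∧ Odd w.length ∧
          ¬ ([1, 1] <:+: w) ∧ ¬ ([0, 0, 0] <+: w) ∧ ¬ ([1, 0, 1] <+: w) ∧
          valFc w = n) := by
  intro n w
  rcases w with _ | ⟨_ | _ | _, ds⟩
  · simp [RepSpec]
  · exact repSpec_zero_cons_iff hφa hφb hseed.2 n ds
  · exact repSpec_one_cons_iff hφa hφb hseed.1 n ds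
  · simp [RepSpec]

/-- For the Fibonacci substitution `φ : a ↦ ab, b ↦ a` and its
two-sided periodic point `γ` of period 2 with seed `b|a`, the numeration system
`rep_γ` is the Fibonacci analogue of the two's complement numeration system:
`rep_γ(n)` is the unique odd-length binary word avoiding the factor `11`, not
starting with `000` nor `101`, whose value `Σ w_i F_i − w_{k-1} F_k` is `n`. -/
theorem rep_eq_fib_complement [Finite A] (a b : A) (hab : a ≠ b)
    (φ : A → List A) (hφa : φ a = [a, b]) (hφb : φ b = [a])
    (γ : ℤ → A) (hγ : TwoSidedPerPoint φ 2 γ)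
    (hseed : γ (-1) = b ∧ γ 0 = a) :
    ∀ (n : ℤ) (w : List ℕ),
      RepSpec φ 2 γ n w ↔
        ((∀ d ∈ w, d < 2) ∧ Odd w.length ∧
          ¬ ([1, 1] <:+: w) ∧ ¬ ([0, 0, 0] <+: w) ∧ ¬ ([1, 0, 1] <+: w) ∧
          valFc w = n) :=
  rep_eq_fib_complement_general a b φ hφa hφb γ hseed
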